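/- Let θ be any parameter vector of the original network and let θ̂ = β_{ζs}(θ) for arbitrary ζ_k ∈ ℝ and s_{jk} ∈ ℝ, j = 1,…,H_{ℓ̂+1}, k = 1,…,K. Then the empirical risk is preserved: R̂_emp(β_{ζs}(θ)) = R_emp(θ). -/

import Mathlib

/-- Parameters of a fully connected feedforward network: `w ℓ j i` is the weight from
unit `i` of layer `ℓ-1` to unit `j` of layer `ℓ`, and `b ℓ j` is the bias of unit `j`
of layer `ℓ`.  Layers are numbered `1, …, L` (layer `0` is the input); units within a
layer are numbered from `0`, so layer `ℓ` consists of the units `0, …, H ℓ - 1`. -/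
structure NNParams where
  w : ℕ → ℕ → ℕ → ℝ
  b : ℕ → ℕ → ℝ

/-- `layerOut g H θ x ℓ i` : the output of unit `i` of layer `ℓ` on input `x`
(`layerOut g H θ x 0 = x`, and for `ℓ ≥ 1` it is `g` applied to the pre-activation). -/
noncomputable def layerOut (g : ℝ → ℝ) (H : ℕ → ℕ) (θ : NNParams) (x : ℕ → ℝ) :
    ℕ → ℕ → ℝ
  | 0, i => x i
  | ℓ + 1, i =>
      g (∑ j ∈ Finset.range (H ℓ), θ.w (ℓ + 1) i j * layerOut g H θ x ℓ j + θ.b (ℓ + 1) i)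

/-- Pre-activation `a_j^ℓ(x, θ)` of unit `j` of layer `ℓ ≥ 1`:
`a_j^ℓ = ∑_{i < H (ℓ-1)} w_{ji}^ℓ · (output of unit i of layer ℓ-1) + σ_j^ℓ`.
The outputs of the last layer `L` are `f_r(x,θ) = preact g H θ x L r` (linear output units). -/
noncomputable def preact (g : ℝ → ℝ) (H : ℕ → ℕ) (θ : NNParams) (x : ℕ → ℝ)
    (ℓ j : ℕ) : ℝ :=
  ∑ i ∈ Finset.range (H (ℓ - 1)), θ.w ℓ j i * layerOut g H θ x (ℓ - 1) i + θ.b ℓ j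

/-- Empirical risk `R_emp(θ) = (1/P) ∑_{p<P} ℒ(y^p, f(x^p, θ))`, where the network has
`L` layers with layer sizes given by `H`, the training inputs are `X p` and the labels
`Y p`, and `m` is the output dimension seen by the loss. -/
noncomputable def Remp (g : ℝ → ℝ) (H : ℕ → ℕ) (L P : ℕ) {m : ℕ}
    (X Y : ℕ → ℕ → ℝ) (loss : (ℕ → ℝ) → (Fin m → ℝ) → ℝ) (θ : NNParams) : ℝ :=
  (1 / (P : ℝ)) * ∑ p ∈ Finset.range P,
    loss (Y p) (fun r => preact g H θ (X p) L r)

/-- Layer sizes of the network enlarged by adding `K` new neurons to layer `l`. -/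
def enlargeH (H : ℕ → ℕ) (l K : ℕ) : ℕ → ℕ :=
  fun ℓ => if ℓ = l then H l + K else H ℓ

/-- The embedding `α_{ζv}` : copy all parameters, give the `k`-th new neuron of layer `l`
(`k = 0, …, K-1`, i.e. unit `H l + k`) the bias `ζ k` and incoming weights `v k`, and
set all weights from the new neurons to layer `l+1` to zero. -/
noncomputable def alphaEmb (H : ℕ → ℕ) (l K : ℕ) (ζ : ℕ → ℝ) (v : ℕ → ℕ → ℝ)
    (θ : NNParams) : NNParams where
  w := fun ℓ j i =>
    if ℓ = l ∧ H l ≤ j then v (j - H l) i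
    else if ℓ = l + 1 ∧ H l ≤ i then 0
    else θ.w ℓ j i
  b := fun ℓ j => if ℓ = l ∧ H l ≤ j then ζ (j - H l) else θ.b ℓ j

/-- The embedding `β_{ζs}` : copy all parameters except the biases of layer `l+1`, give
the `k`-th new neuron of layer `l` the bias `ζ k` and zero incoming weights, set the
outgoing weight from the `k`-th new neuron to unit `j` of layer `l+1` to `s j k`, and
replace the bias of unit `j` of layer `l+1` by `σ_j - ∑_{k<K} s j k · g (ζ k)`. -/
noncomputable def betaEmb (g : ℝ → ℝ) (H : ℕ → ℕ) (l K : ℕ) (ζ : ℕ → ℝ)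
    (s : ℕ → ℕ → ℝ) (θ : NNParams) : NNParams where
  w := fun ℓ j i =>
    if ℓ = l ∧ H l ≤ j then 0
    else if ℓ = l + 1 ∧ H l ≤ i then s j (i - H l)
    else θ.w ℓ j i
  b := fun ℓ j =>
    if ℓ = l ∧ H l ≤ j then ζ (j - H l)
    else if ℓ = l + 1 then θ.b (l + 1) j - ∑ k ∈ Finset.range K, s j k * g (ζ k)
    else θ.b ℓ j

/-- The embedding `γ_λ` : duplicate unit `h` of layer `l` into each of the `K` new
neurons (same bias and incoming weights as unit `h`), and split the outgoing weights:
unit `h` keeps `lam 0 · w_{jh}^{l+1}` and the `k`-th new neuron (`k = 0, …, K-1`,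
i.e. unit `H l + k`, corresponding to `λ_{k+1}` of the paper) gets
`lam (k+1) · w_{jh}^{l+1}`; all other parameters are copied. -/
noncomputable def gammaEmb (H : ℕ → ℕ) (l K : ℕ) (h : ℕ) (lam : ℕ → ℝ)
    (θ : NNParams) : NNParams where
  w := fun ℓ j i =>
    if ℓ = l ∧ H l ≤ j then θ.w l h i
    else if ℓ = l + 1 ∧ i = h then lam 0 * θ.w (l + 1) j h
    else if ℓ = l + 1 ∧ H l ≤ i then lam (i - H l + 1) * θ.w (l + 1) j h
    else θ.w ℓ j i
  b := fun ℓ j => if ℓ = l ∧ H l ≤ j then θ.b l h else θ.b ℓ j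

/-- `θ` with the single weight `w ℓ j i` replaced by `t`. -/
noncomputable def updW (θ : NNParams) (ℓ j i : ℕ) (t : ℝ) : NNParams :=
  ⟨fun ℓ' j' i' => if ℓ' = ℓ ∧ j' = j ∧ i' = i then t else θ.w ℓ' j' i', θ.b⟩

/-- `θ` with the single bias `b ℓ j` replaced by `t`. -/
noncomputable def updB (θ : NNParams) (ℓ j : ℕ) (t : ℝ) : NNParams :=
  ⟨θ.w, fun ℓ' j' => if ℓ' = ℓ ∧ j' = j then t else θ.b ℓ' j'⟩

/-- `∇ R_emp(θ) = 0` : every partial derivative of the empirical risk with respect to an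
actual network parameter (a weight `w ℓ j i` or a bias `b ℓ j`, `1 ≤ ℓ ≤ L`, `j < H ℓ`,
`i < H (ℓ-1)`) vanishes at `θ`. -/
def IsCritical (g : ℝ → ℝ) (H : ℕ → ℕ) (L P : ℕ) {m : ℕ}
    (X Y : ℕ → ℕ → ℝ) (loss : (ℕ → ℝ) → (Fin m → ℝ) → ℝ) (θ : NNParams) : Prop :=
  (∀ ℓ j i, 1 ≤ ℓ → ℓ ≤ L → j < H ℓ → i < H (ℓ - 1) →
      deriv (fun t => Remp g H L P X Y loss (updW θ ℓ j i t)) (θ.w ℓ j i) = 0) ∧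
  ∀ ℓ j, 1 ≤ ℓ → ℓ ≤ L → j < H ℓ →
      deriv (fun t => Remp g H L P X Y loss (updB θ ℓ j t)) (θ.b ℓ j) = 0

/-- Layer sizes after enlarging layer `p.1` by `p.2` neurons for each pair in the list. -/
def multiEnlargeH : (ℕ → ℕ) → List (ℕ × ℕ) → (ℕ → ℕ)
  | H, [] => H
  | H, (l, K) :: rest => multiEnlargeH (enlargeH H l K) rest

/-- Composition of `α` embeddings: for each `(l, K)` in the list (in order), add `K` new
neurons to layer `l` via `α` with biases `ζ l` and incoming weights `v l`. -/
noncomputable def multiAlpha (ζ : ℕ → ℕ → ℝ) (v : ℕ → ℕ → ℕ → ℝ) :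
    (ℕ → ℕ) → List (ℕ × ℕ) → NNParams → NNParams
  | _, [], θ => θ
  | H, (l, K) :: rest, θ =>
      multiAlpha ζ v (enlargeH H l K) rest (alphaEmb H l K (ζ l) (v l) θ)

noncomputable def multiBeta (g : ℝ → ℝ) (ζ : ℕ → ℕ → ℝ) (s : ℕ → ℕ → ℕ → ℝ) :
    (ℕ → ℕ) → List (ℕ × ℕ) → NNParams → NNParams
  | _, [], θ => θ
  | H, (l, K) :: rest, θ =>
      multiBeta g ζ s (enlargeH H l K) rest (betaEmb g H l K (ζ l) (s l) θ)

noncomputable def multiGamma (hsel : ℕ → ℕ) (lam : ℕ → ℕ → ℝ) :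
    (ℕ → ℕ) → List (ℕ × ℕ) → NNParams → NNParams
  | _, [], θ => θ
  | H, (l, K) :: rest, θ =>
      multiGamma hsel lam (enlargeH H l K) rest (gammaEmb H l K (hsel l) (lam l) θ)

/-- A single enlargement step: either a `β` embedding with zero outgoing weights, or a
`γ` embedding. -/
inductive EmbStep where
  | beta (l K : ℕ) (ζ : ℕ → ℝ)
  | gamma (l K : ℕ) (h : ℕ) (lam : ℕ → ℝ)

def EmbStep.layer : EmbStep → ℕ
  | .beta l _ _ => l
  | .gamma l _ _ _ => l

def EmbStep.count : EmbStep → ℕ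
  | .beta _ K _ => K
  | .gamma _ K _ _ => K

noncomputable def EmbStep.apply (g : ℝ → ℝ) (H : ℕ → ℕ) (θ : NNParams) : EmbStep → NNParams
  | .beta l K ζ => betaEmb g H l K ζ (fun _ _ => 0) θ
  | .gamma l K h lam => gammaEmb H l K h lam θ

def EmbStep.OK (H : ℕ → ℕ) (L : ℕ) : EmbStep → Prop
  | .beta l _ _ => 1 ≤ l ∧ l + 1 ≤ L
  | .gamma l K h lam => 1 ≤ l ∧ l + 1 ≤ L ∧ h < H l ∧ ∑ i ∈ Finset.range (K + 1), lam i = 1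

noncomputable def applySteps (g : ℝ → ℝ) : (ℕ → ℕ) → List EmbStep → NNParams → NNParams
  | _, [], θ => θ
  | H, st :: rest, θ =>
      applySteps g (enlargeH H st.layer st.count) rest (EmbStep.apply g H θ st)

def stepsH : (ℕ → ℕ) → List EmbStep → (ℕ → ℕ)
  | H, [] => H
  | H, st :: rest => stepsH (enlargeH H st.layer st.count) rest

/-!
The new neurons of layer `l` have zero incoming weights, so on every input they output the
constant `g (ζ k)`. Their contribution `∑ k, s j k * g (ζ k)` to the pre-activation of unit
`j` of layer `l + 1` is exactly what the bias shift subtracts, so every original unit of the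
enlarged network computes the same function as before, and in particular so do the outputs.
-/

theorem enlargeH_self (H : ℕ → ℕ) (l K : ℕ) : enlargeH H l K l = H l + K :=
  if_pos rfl

theorem enlargeH_of_ne (H : ℕ → ℕ) {l ℓ : ℕ} (K : ℕ) (h : ℓ ≠ l) : enlargeH H l K ℓ = H ℓ :=
  if_neg h

theorem layerOut_succ (g : ℝ → ℝ) (H : ℕ → ℕ) (θ : NNParams) (x : ℕ → ℝ) (ℓ j : ℕ) :
    layerOut g H θ x (ℓ + 1) j = g (preact g H θ x (ℓ + 1) j) :=
  rfl

section BetaEmb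

variable {g : ℝ → ℝ} {H : ℕ → ℕ} {l K : ℕ} {ζ : ℕ → ℝ} {s : ℕ → ℕ → ℝ} {θ : NNParams}

theorem betaEmb_w_of_old {ℓ j i : ℕ} (hj : ¬ (ℓ = l ∧ H l ≤ j)) (hi : ¬ (ℓ = l + 1 ∧ H l ≤ i)) :
    (betaEmb g H l K ζ s θ).w ℓ j i = θ.w ℓ j i := by
  simp [betaEmb, hj, hi]

theorem betaEmb_b_of_old {ℓ j : ℕ} (hj : ¬ (ℓ = l ∧ H l ≤ j)) (hℓ : ℓ ≠ l + 1) :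
    (betaEmb g H l K ζ s θ).b ℓ j = θ.b ℓ j := by
  simp [betaEmb, hj, hℓ]

theorem betaEmb_w_of_new {j : ℕ} (hj : H l ≤ j) (i : ℕ) :
    (betaEmb g H l K ζ s θ).w l j i = 0 := by
  simp [betaEmb, hj]

theorem betaEmb_b_of_new {j : ℕ} (hj : H l ≤ j) :
    (betaEmb g H l K ζ s θ).b l j = ζ (j - H l) := by
  simp [betaEmb, hj]

theorem betaEmb_w_succ_new (j k : ℕ) :
    (betaEmb g H l K ζ s θ).w (l + 1) j (H l + k) = s j k := by
  simp [betaEmb]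

theorem betaEmb_b_succ (j : ℕ) :
    (betaEmb g H l K ζ s θ).b (l + 1) j
      = θ.b (l + 1) j - ∑ k ∈ Finset.range K, s j k * g (ζ k) := by
  simp [betaEmb]

theorem sum_betaEmb_w_succ (j : ℕ) (y : ℕ → ℝ) :
    ∑ i ∈ Finset.range (H l + K),
        (betaEmb g H l K ζ s θ).w (l + 1) j i * (if H l ≤ i then g (ζ (i - H l)) else y i)
      = ∑ i ∈ Finset.range (H l), θ.w (l + 1) j i * y i
        + ∑ k ∈ Finset.range K, s j k * g (ζ k) := by
  rw [Finset.sum_range_add]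
  congr 1
  · refine Finset.sum_congr rfl fun i hi => ?_
    have hi : ¬ H l ≤ i := by simpa using hi
    rw [betaEmb_w_of_old (by omega) (by omega), if_neg hi]
  · refine Finset.sum_congr rfl fun k _ => ?_
    simp [betaEmb_w_succ_new]

theorem preact_succ_betaEmb (x : ℕ → ℝ) (j : ℕ)
    (hprev : ∀ i, layerOut g (enlargeH H l K) (betaEmb g H l K ζ s θ) x l i
      = if H l ≤ i then g (ζ (i - H l)) else layerOut g H θ x l i) :
    preact g (enlargeH H l K) (betaEmb g H l K ζ s θ) x (l + 1) j
      = preact g H θ x (l + 1) j := by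
  simp only [preact, Nat.add_sub_cancel, enlargeH_self, hprev, sum_betaEmb_w_succ,
    betaEmb_b_succ]
  ring

theorem preact_betaEmb_of_layerOut (hl : 1 ≤ l) (x : ℕ → ℝ) {ℓ j : ℕ}
    (hj : ¬ (ℓ = l ∧ H l ≤ j))
    (hprev : ∀ i, layerOut g (enlargeH H l K) (betaEmb g H l K ζ s θ) x (ℓ - 1) i
      = if ℓ - 1 = l ∧ H l ≤ i then g (ζ (i - H l)) else layerOut g H θ x (ℓ - 1) i) :
    preact g (enlargeH H l K) (betaEmb g H l K ζ s θ) x ℓ j = preact g H θ x ℓ j := by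
  by_cases hℓ : ℓ = l + 1
  · subst hℓ
    exact preact_succ_betaEmb x j (by simpa using hprev)
  · have hℓ' : ℓ - 1 ≠ l := by omega
    simp only [preact, enlargeH_of_ne H K hℓ', hprev, hℓ', false_and, if_false,
      betaEmb_b_of_old hj hℓ]
    congr 1
    exact Finset.sum_congr rfl fun i _ => by rw [betaEmb_w_of_old hj (by omega)]

theorem layerOut_betaEmb (hl : 1 ≤ l) (x : ℕ → ℝ) (ℓ j : ℕ) :
    layerOut g (enlargeH H l K) (betaEmb g H l K ζ s θ) x ℓ j
      = if ℓ = l ∧ H l ≤ j then g (ζ (j - H l)) else layerOut g H θ x ℓ j := by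
  induction ℓ generalizing j with
  | zero => rw [if_neg (by omega)]; rfl
  | succ ℓ ih =>
    by_cases hj : ℓ + 1 = l ∧ H l ≤ j
    · obtain ⟨rfl, hj⟩ := hj
      simp [layerOut_succ, preact, betaEmb_w_of_new hj, betaEmb_b_of_new hj, hj]
    · rw [if_neg hj, layerOut_succ, layerOut_succ, preact_betaEmb_of_layerOut hl x hj ih]

theorem preact_betaEmb (hl : 1 ≤ l) (x : ℕ → ℝ) {ℓ j : ℕ} (hj : ¬ (ℓ = l ∧ H l ≤ j)) :
    preact g (enlargeH H l K) (betaEmb g H l K ζ s θ) x ℓ j = preact g H θ x ℓ j :=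
  preact_betaEmb_of_layerOut hl x hj fun _ => layerOut_betaEmb hl x _ _

end BetaEmb

theorem betaEmb_preserves_Remp_general
    (g : ℝ → ℝ) (H : ℕ → ℕ) (L P : ℕ) (X Y : ℕ → ℕ → ℝ)
    (loss : (ℕ → ℝ) → (Fin (H L) → ℝ) → ℝ)
    (l : ℕ) (hl1 : 1 ≤ l) (K : ℕ)
    (ζ : ℕ → ℝ) (s : ℕ → ℕ → ℝ) (θ : NNParams) :
    Remp g (enlargeH H l K) L P X Y loss (betaEmb g H l K ζ s θ)
      = Remp g H L P X Y loss θ := by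
  have hout : ∀ x (r : Fin (H L)),
      preact g (enlargeH H l K) (betaEmb g H l K ζ s θ) x L r = preact g H θ x L r :=
    fun x r => preact_betaEmb hl1 x fun ⟨hL, hr⟩ => by subst hL; exact hr.not_gt r.isLt
  simp only [Remp, hout]

/-- For every parameter vector `θ` of the original network and arbitrary
`ζ k ∈ ℝ`, `s j k ∈ ℝ`, the `β` embedding preserves the empirical risk:
`R̂_emp(β_{ζs}(θ)) = R_emp(θ)`. -/
theorem betaEmb_preserves_Remp
    (g : ℝ → ℝ) (H : ℕ → ℕ) (L P : ℕ) (X Y : ℕ → ℕ → ℝ)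
    (loss : (ℕ → ℝ) → (Fin (H L) → ℝ) → ℝ)
    (l : ℕ) (hl1 : 1 ≤ l) (hlL : l + 1 ≤ L) (K : ℕ)
    (ζ : ℕ → ℝ) (s : ℕ → ℕ → ℝ) (θ : NNParams) :
    Remp g (enlargeH H l K) L P X Y loss (betaEmb g H l K ζ s θ)
      = Remp g H L P X Y loss θ :=
  betaEmb_preserves_Remp_general g H L P X Y loss l hl1 K ζ s θ
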